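/- Suboptimality decomposition for conditional generation: let f*(r) be the ground-truth reward with f*(r) = g*(r_∥) + h*(r_⊥) where r = r_∥ when r lies on the data support (so h*(r_⊥)=0 there), let f̂ be an estimated reward with E_{r∼q_a}[f̂(r)] = a, and let q_a and p̂_a be the true and estimated conditional distributions given reward value a. Then a − E_{r∼p̂_a}[f*(r)] ≤ E_{r∼q_a}|f̂(r) − g*(r)| + |E_{r∼q_a}[g*(r_∥)] − E_{r∼p̂_a}[g*(r_∥)]| + E_{r∼p̂_a}[|h*(r_⊥)|]. -/

import Mathlib

/-! Telescoping through `E_{q_a}[f̂]` and `E_{q_a}[g*]`,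
`a − E_{p̂_a}[f*] = (E_{q_a}[f̂] − E_{q_a}[g*]) + (E_{q_a}[g*] − E_{p̂_a}[g*]) − E_{p̂_a}[h*]`,
and each of the three terms is bounded by the corresponding absolute value. -/

open MeasureTheory

section

variable {E : Type*} [MeasurableSpace E] {μ : Measure E}

lemma integral_sub_integral_le_integral_abs_sub {f g : E → ℝ} (hf : Integrable f μ)
    (hg : Integrable g μ) : ∫ r, f r ∂μ - ∫ r, g r ∂μ ≤ ∫ r, |f r - g r| ∂μ := by
  rw [← integral_sub hf hg]
  exact (le_abs_self _).trans abs_integral_le_integral_abs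

lemma neg_integral_le_integral_abs (h : E → ℝ) : -∫ r, h r ∂μ ≤ ∫ r, |h r| ∂μ :=
  (neg_le_abs _).trans abs_integral_le_integral_abs

end

theorem stmt9_general {E : Type*} [MeasurableSpace E]
    (qa phat : Measure E)
    (fstar gstar hstar fhat : E → ℝ) (a : ℝ)
    (hdecomp : ∀ r, fstar r = gstar r + hstar r)
    (hmean : ∫ r, fhat r ∂qa = a)
    (hint2 : Integrable gstar phat)
    (hint3 : Integrable hstar phat) (hint4 : Integrable gstar qa)
    (hint5 : Integrable fhat qa) :
    a - ∫ r, fstar r ∂phat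
      ≤ (∫ r, |fhat r - gstar r| ∂qa)
        + |(∫ r, gstar r ∂qa) - ∫ r, gstar r ∂phat|
        + ∫ r, |hstar r| ∂phat := by
  have hsplit : ∫ r, fstar r ∂phat = ∫ r, gstar r ∂phat + ∫ r, hstar r ∂phat := by
    simp only [hdecomp]
    exact integral_add hint2 hint3
  have hfit := integral_sub_integral_le_integral_abs_sub hint5 hint4
  have hshift := le_abs_self ((∫ r, gstar r ∂qa) - ∫ r, gstar r ∂phat)
  have hoff := neg_integral_le_integral_abs (μ := phat) hstar
  rw [← hmean, hsplit]
  linarith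

/-- Suboptimality decomposition for conditional generation: with ground-truth reward
`f* = g* + h*` where `h*` vanishes on the support of the true conditional distribution
`q_a`, and an estimated reward `fhat` with `E_{q_a}[fhat] = a`, the suboptimality of the
estimated conditional distribution `p̂_a` is bounded by
`E_{q_a}|fhat − g*| + |E_{q_a}[g*] − E_{p̂_a}[g*]| + E_{p̂_a}|h*|`. -/
theorem stmt9 {E : Type*} [MeasurableSpace E]
    (qa phat : Measure E) [IsProbabilityMeasure qa] [IsProbabilityMeasure phat]
    (fstar gstar hstar fhat : E → ℝ) (a : ℝ)
    (hdecomp : ∀ r, fstar r = gstar r + hstar r)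
    (hvanish : ∀ᵐ r ∂qa, hstar r = 0)
    (hmean : ∫ r, fhat r ∂qa = a)
    (hint1 : Integrable fstar phat) (hint2 : Integrable gstar phat)
    (hint3 : Integrable hstar phat) (hint4 : Integrable gstar qa)
    (hint5 : Integrable fhat qa) :
    a - ∫ r, fstar r ∂phat
      ≤ (∫ r, |fhat r - gstar r| ∂qa)
        + |(∫ r, gstar r ∂qa) - ∫ r, gstar r ∂phat|
        + ∫ r, |hstar r| ∂phat :=
  stmt9_general qa phat fstar gstar hstar fhat a hdecomp hmean hint2 hint3 hint4 hint5
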